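/- arXiv:2309.01583 — 4 statements merged into one kernel-verified Lean document; each statement's English description precedes it below -/
import Mathlib

section
/- For every finite simple graph G, the game chromatic number is at most the game chromatic number with blanks: χ_g(G) ≤ χ_gb(G). -/
open Function

namespace GameCol

variable {V : Type*} [Fintype V] [DecidableEq V]

/-- A finite set of vertices is independent in `G`. -/
def IsIndepF (G : SimpleGraph V) (s : Finset V) : Prop :=
  ∀ u ∈ s, ∀ v ∈ s, ¬ G.Adj u v

/-! ### The vertex colouring game.

A position is a partial proper colouring `f : V → Option ℕ` (`none` = uncoloured);
the palette consists of the `k` colours `0, …, k-1`.  The `Bool` records whose turn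
it is (`true` = Maker).  Players alternate, Maker moving first, always making a legal
move if one exists; the game ends when the player to move has no legal move, and
Maker wins if and only if the whole graph is then coloured. -/

/-- Colour `c` may legally be played at `v`. -/
def ColLegal (G : SimpleGraph V) (k : ℕ) (f : V → Option ℕ) (v : V) (c : ℕ) : Prop :=
  c < k ∧ f v = none ∧ ∀ u, G.Adj v u → f u ≠ some c

/-- Every vertex is coloured. -/
def FullC (f : V → Option ℕ) : Prop := ∀ v, f v ≠ none

/-- Maker wins the vertex colouring game from the given position with optimal play
(`fuel` is an upper bound on the number of remaining moves). -/
def MakerWinsC (G : SimpleGraph V) (k : ℕ) : ℕ → (V → Option ℕ) → Bool → Prop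
  | 0, f, _ => FullC f
  | fuel + 1, f, true => FullC f ∨
      ∃ v c, ColLegal G k f v c ∧ MakerWinsC G k fuel (update f v (some c)) false
  | fuel + 1, f, false => FullC f ∨
      ((∃ v c, ColLegal G k f v c) ∧
        ∀ v c, ColLegal G k f v c → MakerWinsC G k fuel (update f v (some c)) true)

/-- The game chromatic number `χ_g(G)`: the least number of colours for which Maker
has a winning strategy in the vertex colouring game. -/
noncomputable def gameChromaticNumber (G : SimpleGraph V) : ℕ :=
  sInf {k | MakerWinsC G k (Fintype.card V) (fun _ => none) true}

/-! ### The vertex colouring game with blanks.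

Positions are `f : V → Option (Option ℕ)`: `none` = unplayed, `some none` = blank,
`some (some c)` = coloured with colour `c`.  The palette is a finite set `K ⊆ ℕ` of
colours.  On her turn Maker must play a colour; on his turn Breaker may play a colour,
or a blank at any unplayed vertex.  The game ends as soon as no vertex can legally
receive a colour, and Maker wins iff every vertex is then coloured or blank. -/

/-- Colour `c` may legally be played at `v` (blanks put no restriction on their
neighbours). -/
def BColLegal (G : SimpleGraph V) (K : Finset ℕ) (f : V → Option (Option ℕ))
    (v : V) (c : ℕ) : Prop :=
  c ∈ K ∧ f v = none ∧ ∀ u, G.Adj v u → f u ≠ some (some c)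

/-- Every vertex is coloured or blank. -/
def AllPlayed (f : V → Option (Option ℕ)) : Prop := ∀ v, f v ≠ none

/-- Maker wins the vertex colouring game with blanks from the given position. -/
def MakerWinsB (G : SimpleGraph V) (K : Finset ℕ) :
    ℕ → (V → Option (Option ℕ)) → Bool → Prop
  | 0, f, _ => AllPlayed f
  | fuel + 1, f, true => AllPlayed f ∨
      ∃ v c, BColLegal G K f v c ∧ MakerWinsB G K fuel (update f v (some (some c))) false
  | fuel + 1, f, false =>
      ((¬ ∃ v c, BColLegal G K f v c) ∧ AllPlayed f) ∨
      ((∃ v c, BColLegal G K f v c) ∧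
        (∀ v c, BColLegal G K f v c →
          MakerWinsB G K fuel (update f v (some (some c))) true) ∧
        (∀ v, f v = none → MakerWinsB G K fuel (update f v (some none)) true))

/-- The game chromatic number with blanks `χ_gb(G)`: the least number of colours for
which Maker has a winning strategy in the vertex colouring game with blanks. -/
noncomputable def chiGb (G : SimpleGraph V) : ℕ :=
  sInf {k | MakerWinsB G (Finset.range k) (Fintype.card V) (fun _ => none) true}

/-! ### The game with blanks, with classes marked for blanks.

The extra datum is the finite set `ds` of currently marked classes.  Maker may also
play blanks at unplayed vertices of marked classes; the game does not end while some
vertex of a marked class is unplayed; and whenever Breaker plays a blank at `v` he may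
additionally remove one marked class not containing `v`. -/

/-- `v` belongs to some class marked for blanks. -/
def InMarked (ds : Finset (Finset V)) (v : V) : Prop := ∃ d ∈ ds, v ∈ d

/-- The game has ended: no colour move is available and no vertex of a class marked
for blanks is left unplayed. -/
def MEnded (G : SimpleGraph V) (K : Finset ℕ) (f : V → Option (Option ℕ))
    (ds : Finset (Finset V)) : Prop :=
  (¬ ∃ v c, BColLegal G K f v c) ∧ ∀ v, InMarked ds v → f v ≠ none

/-- Maker wins the vertex colouring game with blanks, with the classes `ds` marked
for blanks, from the given position. -/
def MakerWinsM (G : SimpleGraph V) (K : Finset ℕ) :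
    ℕ → (V → Option (Option ℕ)) → Finset (Finset V) → Bool → Prop
  | 0, f, _, _ => AllPlayed f
  | fuel + 1, f, ds, true =>
      (MEnded G K f ds ∧ AllPlayed f) ∨
      (¬ MEnded G K f ds ∧
        ((∃ v c, BColLegal G K f v c ∧
            MakerWinsM G K fuel (update f v (some (some c))) ds false) ∨
         (∃ v, f v = none ∧ InMarked ds v ∧
            MakerWinsM G K fuel (update f v (some none)) ds false)))
  | fuel + 1, f, ds, false =>
      (MEnded G K f ds ∧ AllPlayed f) ∨
      (¬ MEnded G K f ds ∧
        (∀ v c, BColLegal G K f v c →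
          MakerWinsM G K fuel (update f v (some (some c))) ds true) ∧
        (∀ v, f v = none →
          MakerWinsM G K fuel (update f v (some none)) ds true ∧
          ∀ d ∈ ds, v ∉ d →
            MakerWinsM G K fuel (update f v (some none)) (ds.erase d) true))

/-- `χ_gb(G; D₁,…,Dₛ)`: the least number of colours for which Maker has a winning
strategy in the vertex colouring game with blanks with the classes in `ds` marked for
blanks. -/
noncomputable def chiGbM (G : SimpleGraph V) (ds : Finset (Finset V)) : ℕ :=
  sInf {k | MakerWinsM G (Finset.range k) (Fintype.card V) (fun _ => none) ds true}

/-! ### Move sequences, for conditioning the game on an initial sequence of plays. -/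

/-- A move in the game with blanks: a colour at a vertex, or a blank at a vertex
together with an optional marked class which Breaker removes. -/
inductive BMove (W : Type*) where
  | color (v : W) (c : ℕ)
  | blank (v : W) (removed : Option (Finset W))
  deriving DecidableEq

/-- The vertex at which a move is made. -/
def BMove.vertex {W : Type*} : BMove W → W
  | .color v _ => v
  | .blank v _ => v

/-- The effect of a single move on a position. -/
def bStep (st : (V → Option (Option ℕ)) × Finset (Finset V)) :
    BMove V → (V → Option (Option ℕ)) × Finset (Finset V)
  | .color v c => (update st.1 v (some (some c)), st.2)
  | .blank v none => (update st.1 v (some none), st.2)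
  | .blank v (some d) => (update st.1 v (some none), st.2.erase d)

/-- The position reached after the sequence `P` of moves. -/
def bRun (st : (V → Option (Option ℕ)) × Finset (Finset V)) (P : List (BMove V)) :
    (V → Option (Option ℕ)) × Finset (Finset V) :=
  P.foldl bStep st

/-- `P` is a legal sequence of moves from the given position in the game with blanks
with marked classes (the `Bool` is the player to move, `true` = Maker). -/
def LegalSeqM (G : SimpleGraph V) (K : Finset ℕ) :
    (V → Option (Option ℕ)) → Finset (Finset V) → Bool → List (BMove V) → Prop
  | _, _, _, [] => True
  | f, ds, true, BMove.color v c :: rest =>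
      ¬ MEnded G K f ds ∧ BColLegal G K f v c ∧
        LegalSeqM G K (update f v (some (some c))) ds false rest
  | f, ds, true, BMove.blank v r :: rest =>
      ¬ MEnded G K f ds ∧ f v = none ∧ InMarked ds v ∧ r = none ∧
        LegalSeqM G K (update f v (some none)) ds false rest
  | f, ds, false, BMove.color v c :: rest =>
      ¬ MEnded G K f ds ∧ BColLegal G K f v c ∧
        LegalSeqM G K (update f v (some (some c))) ds true rest
  | f, ds, false, BMove.blank v none :: rest =>
      ¬ MEnded G K f ds ∧ f v = none ∧
        LegalSeqM G K (update f v (some none)) ds true rest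
  | f, ds, false, BMove.blank v (some d) :: rest =>
      ¬ MEnded G K f ds ∧ f v = none ∧ d ∈ ds ∧ v ∉ d ∧
        LegalSeqM G K (update f v (some none)) (ds.erase d) true rest

/-- `χ_gb(G; ds | P)`: the least number of colours for which Maker has a winning
strategy in the vertex colouring game with blanks with the classes `ds` marked for
blanks, conditioned on the game starting with the sequence `P` of moves. -/
noncomputable def chiGbMCond (G : SimpleGraph V) (ds : Finset (Finset V))
    (P : List (BMove V)) : ℕ :=
  sInf {n | ∃ K : Finset ℕ, K.card = n ∧
    LegalSeqM G K (fun _ => none) ds true P ∧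
    MakerWinsM G K (Fintype.card V - P.length) (bRun (fun _ => none, ds) P).1
      (bRun (fun _ => none, ds) P).2 (decide (P.length % 2 = 0))}

/-! ### The marking game. -/

/-- `v` may legally be marked: it is unmarked and has at most `k - 1` marked
neighbours. -/
def MarkLegal (G : SimpleGraph V) (k : ℕ) (M : Set V) (v : V) : Prop :=
  v ∉ M ∧ (M ∩ {u | G.Adj v u}).ncard < k

/-- Maker wins the marking game from the given position. -/
def MakerWinsMark (G : SimpleGraph V) (k : ℕ) : ℕ → Set V → Bool → Prop
  | 0, M, _ => ∀ v, v ∈ M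
  | fuel + 1, M, true => (∀ v, v ∈ M) ∨
      ∃ v, MarkLegal G k M v ∧ MakerWinsMark G k fuel (insert v M) false
  | fuel + 1, M, false => (∀ v, v ∈ M) ∨
      ((∃ v, MarkLegal G k M v) ∧
        ∀ v, MarkLegal G k M v → MakerWinsMark G k fuel (insert v M) true)

/-- The marking number (game colouring number) `m(G)`: the least `k` for which Maker
has a winning strategy in the marking game. -/
noncomputable def markingNumber (G : SimpleGraph V) : ℕ :=
  sInf {k | MakerWinsMark G k (Fintype.card V) ∅ true}

end GameCol

/-! A winning strategy for Maker in the game with blanks is also winning in the ordinary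
game, since every move available to Breaker there is a (non-blank) move of the game with
blanks. The only subtlety is that `χ_gb(G)` must be attained: Maker wins the game with blanks
with `|V|` colours, as then every unplayed vertex always has a legal colour. -/

namespace GameCol

variable {V : Type*} (G : SimpleGraph V)

def withoutBlanks (f : V → Option ℕ) : V → Option (Option ℕ) := fun v => (f v).map some

lemma update_withoutBlanks [DecidableEq V] (f : V → Option ℕ) (v : V) (c : ℕ) :
    update (withoutBlanks f) v (some (some c)) = withoutBlanks (update f v (some c)) := by
  funext x
  by_cases h : x = v <;> simp [withoutBlanks, update, h]

lemma bColLegal_withoutBlanks_iff {k : ℕ} {f : V → Option ℕ} {v : V} {c : ℕ} :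
    BColLegal G (Finset.range k) (withoutBlanks f) v c ↔ ColLegal G k f v c := by
  simp [BColLegal, ColLegal, withoutBlanks, Option.map_eq_none_iff]

lemma allPlayed_withoutBlanks_iff {f : V → Option ℕ} :
    AllPlayed (withoutBlanks f) ↔ FullC f := by
  simp [AllPlayed, FullC, withoutBlanks, Option.map_eq_none_iff]

theorem makerWinsC_of_makerWinsB [DecidableEq V] {k : ℕ} :
    ∀ {fuel : ℕ} {f : V → Option ℕ} {b : Bool},
      MakerWinsB G (Finset.range k) fuel (withoutBlanks f) b → MakerWinsC G k fuel f b
  | 0, _, _, h => allPlayed_withoutBlanks_iff.mp h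
  | _ + 1, _, true, .inl hall => .inl (allPlayed_withoutBlanks_iff.mp hall)
  | _ + 1, f, true, .inr ⟨v, c, hlegal, hwin⟩ =>
      .inr ⟨v, c, (bColLegal_withoutBlanks_iff G).mp hlegal,
        makerWinsC_of_makerWinsB (update_withoutBlanks f v c ▸ hwin)⟩
  | _ + 1, _, false, .inl ⟨_, hall⟩ => .inl (allPlayed_withoutBlanks_iff.mp hall)
  | _ + 1, f, false, .inr ⟨⟨v, c, hlegal⟩, hcolour, _⟩ =>
      .inr ⟨⟨v, c, (bColLegal_withoutBlanks_iff G).mp hlegal⟩, fun v c hlegal =>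
        makerWinsC_of_makerWinsB <| update_withoutBlanks f v c ▸
          hcolour v c ((bColLegal_withoutBlanks_iff G).mpr hlegal)⟩

lemma exists_bColLegal_of_degree_lt {K : Finset ℕ} {f : V → Option (Option ℕ)} {v : V}
    [Fintype (G.neighborSet v)] (hv : f v = none) (hK : G.degree v < K.card) :
    ∃ c, BColLegal G K f v c := by
  let used := (G.neighborFinset v).image fun u => ((f u).getD none).getD 0
  have hused : used.card < K.card := Finset.card_image_le.trans_lt hK
  obtain ⟨c, hcK, hcused⟩ := Finset.exists_mem_notMem_of_card_lt_card hused
  refine ⟨c, hcK, hv, fun u hu hfu => hcused ?_⟩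
  exact Finset.mem_image.mpr ⟨u, (G.mem_neighborFinset v u).mpr hu, by simp [hfu]⟩

section Counting

variable [Fintype V] [DecidableEq V]

def unplayed (f : V → Option (Option ℕ)) : Finset V := Finset.univ.filter (f · = none)

lemma card_unplayed_update {f : V → Option (Option ℕ)} {v : V} (hv : f v = none)
    (x : Option ℕ) : (unplayed (update f v (some x))).card + 1 = (unplayed f).card := by
  have herase : unplayed (update f v (some x)) = (unplayed f).erase v := by
    ext u
    by_cases hu : u = v <;> simp [unplayed, update, hu, hv]
  rw [herase, Finset.card_erase_add_one (by simp [unplayed, hv])]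

theorem makerWinsB_of_degree_lt [DecidableRel G.Adj] {K : Finset ℕ}
    (hK : ∀ v, G.degree v < K.card) :
    ∀ {fuel : ℕ} {f : V → Option (Option ℕ)} {b : Bool},
      (unplayed f).card ≤ fuel → MakerWinsB G K fuel f b
  | 0, f, _, hf => fun v hv => by
      have hempty : unplayed f = ∅ := Finset.card_eq_zero.mp (Nat.le_zero.mp hf)
      simpa [hempty] using (show v ∈ unplayed f by simp [unplayed, hv])
  | fuel + 1, f, true, hf => by
      by_cases hall : AllPlayed f
      · exact .inl hall
      obtain ⟨v, hv⟩ := not_forall_not.mp hall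
      obtain ⟨c, hc⟩ := exists_bColLegal_of_degree_lt G hv (hK v)
      have hcount := card_unplayed_update hv (some c)
      exact .inr ⟨v, c, hc, makerWinsB_of_degree_lt hK (by omega)⟩
  | fuel + 1, f, false, hf => by
      by_cases hmove : ∃ v c, BColLegal G K f v c
      · refine .inr ⟨hmove, fun v c hc => makerWinsB_of_degree_lt hK ?_,
          fun v hv => makerWinsB_of_degree_lt hK ?_⟩
        · have := card_unplayed_update hc.2.1 (some c); omega
        · have := card_unplayed_update hv none; omega
      · exact .inl ⟨hmove, fun v hv =>
          hmove ⟨v, exists_bColLegal_of_degree_lt G hv (hK v)⟩⟩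

end Counting

/-- For every finite simple graph `G`, `χ_g(G) ≤ χ_gb(G)`. -/
theorem gameChromatic_le_chiGb {V : Type*} [Fintype V] [DecidableEq V]
    (G : SimpleGraph V) :
    gameChromaticNumber G ≤ chiGb G := by
  classical
  have hwins : MakerWinsB G (Finset.range (Fintype.card V)) (Fintype.card V)
      (fun _ => none) true :=
    makerWinsB_of_degree_lt G (fun v => by simpa using G.degree_lt_card_verts v)
      (Finset.card_le_univ _)
  have hchiGb : MakerWinsB G (Finset.range (chiGb G)) (Fintype.card V)
      (withoutBlanks fun _ => none) true :=
    Nat.sInf_mem (s := {k | MakerWinsB G (Finset.range k) _ _ true}) ⟨_, hwins⟩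
  exact Nat.sInf_le (makerWinsC_of_makerWinsB G hchiGb)

end GameCol
end

section
/- Let G be a finite simple graph of order 3, let C_1,…,C_p be a partition of V(G) into p disjoint independent sets, and let D_1,…,D_s be some s ≥ 1 of the sets C_1,…,C_p. Then χ_gb(G; D_1,…,D_s) ≤ p − 1. -/
open Function

namespace GameCol

variable {V : Type*} [Fintype V] [DecidableEq V]

/-!
On three vertices the game lasts three moves, so Maker only has to make a good first move
and then a last one. Let `D` be a marked class. If `D` has two or three vertices, Maker
plays at a vertex `x` with every other vertex in `D` (a blank if `x ∈ D`, otherwise a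
colour, available since then `p ≥ 2`); Breaker can never remove `D`, as his blank lies in
it, so the last vertex can be blanked. If `D = {x}`, Maker blanks `x`; the last vertex then
sees only Breaker's vertex, and if the two are adjacent they lie in two further classes,
so `p ≥ 3` and a second colour is free.
-/

open Finset

section Moves

variable {V : Type*} {G : SimpleGraph V} {K : Finset ℕ} {f : V → Option (Option ℕ)}
  {ds ds' : Finset (Finset V)} {v w : V} {o : Option ℕ} {n : ℕ}

/-- A move of Maker at `v`: a colour, or (for `none`) a blank at a vertex of a marked class. -/
def MakerMove (G : SimpleGraph V) (K : Finset ℕ) (f : V → Option (Option ℕ))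
    (ds : Finset (Finset V)) (v : V) : Option ℕ → Prop
  | some c => BColLegal G K f v c
  | none => f v = none ∧ InMarked ds v

lemma MakerMove.eq_none (h : MakerMove G K f ds v o) : f v = none := by
  cases o
  exacts [h.1, h.2.1]

lemma not_mEnded_of_makerMove (h : MakerMove G K f ds v o) : ¬ MEnded G K f ds := by
  cases o with
  | some c => exact fun he => he.1 ⟨v, c, h⟩
  | none => exact fun he => he.2 v h.2 h.1

variable [DecidableEq V]

/-- A move of Breaker at `v` after which `ds'` is the set of marked classes. -/
def BreakerMove (G : SimpleGraph V) (K : Finset ℕ) (f : V → Option (Option ℕ))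
    (ds : Finset (Finset V)) (v : V) : Option ℕ → Finset (Finset V) → Prop
  | some c, ds' => BColLegal G K f v c ∧ ds' = ds
  | none, ds' => f v = none ∧ (ds' = ds ∨ ∃ d ∈ ds, v ∉ d ∧ ds' = ds.erase d)

lemma BreakerMove.eq_none (h : BreakerMove G K f ds v o ds') : f v = none := by
  cases o
  exacts [h.1, h.1.2.1]

lemma BreakerMove.mem_of_mem {d : Finset V} (h : BreakerMove G K f ds v o ds') (hd : d ∈ ds)
    (hv : v ∈ d) : d ∈ ds' := by
  cases o with
  | some c => exact h.2 ▸ hd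
  | none =>
    obtain ⟨-, rfl | ⟨d', -, hvd', rfl⟩⟩ := h
    · exact hd
    · exact mem_erase.2 ⟨fun hdd' => hvd' (hdd' ▸ hv), hd⟩

lemma MakerMove.of_update_blank (h : MakerMove G K (update f v (some none)) ds w o)
    (hv : f v = none) : MakerMove G K f ds w o := by
  have hwv : w ≠ v := by
    rintro rfl
    simpa using h.eq_none
  cases o with
  | some c =>
    refine ⟨h.1, by simpa [hwv] using h.2.1, fun u hu => ?_⟩
    rcases eq_or_ne u v with rfl | huv
    · simp [hv]
    · simpa [huv] using h.2.2 u hu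
  | none => exact ⟨by simpa [hwv] using h.1, h.2⟩

lemma makerWinsM_succ_of_makerMove (h : MakerMove G K f ds v o)
    (hwin : MakerWinsM G K n (update f v (some o)) ds false) :
    MakerWinsM G K (n + 1) f ds true := by
  refine Or.inr ⟨not_mEnded_of_makerMove h, ?_⟩
  cases o with
  | some c => exact Or.inl ⟨v, c, h, hwin⟩
  | none => exact Or.inr ⟨v, h.1, h.2, hwin⟩

lemma makerWinsM_succ_false_of_forall_breakerMove (hne : ¬ MEnded G K f ds)
    (hwin : ∀ v o ds', BreakerMove G K f ds v o ds' →
      MakerWinsM G K n (update f v (some o)) ds' true) :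
    MakerWinsM G K (n + 1) f ds false :=
  Or.inr ⟨hne, fun v c hc => hwin v (some c) ds ⟨hc, rfl⟩, fun v hv =>
    ⟨hwin v none ds ⟨hv, Or.inl rfl⟩,
      fun d hd hvd => hwin v none _ ⟨hv, Or.inr ⟨d, hd, hvd, rfl⟩⟩⟩⟩

lemma makerWinsM_one_of_makerMove (h : MakerMove G K f ds w o)
    (hplayed : ∀ u, u ≠ w → f u ≠ none) : MakerWinsM G K 1 f ds true := by
  refine makerWinsM_succ_of_makerMove h fun u => ?_
  rcases eq_or_ne u w with rfl | huw
  · simp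
  · simpa [huw] using hplayed u huw

end Moves

section OrderThree

variable {V : Type*} [Fintype V] [DecidableEq V] {G : SimpleGraph V} {K : Finset ℕ}
  {ds : Finset (Finset V)} {x : V} {o : Option ℕ}

lemma exists_third_of_card_eq_three (hn : Fintype.card V = 3) {v : V} (hxv : x ≠ v) :
    ∃ w, w ≠ x ∧ w ≠ v ∧ ∀ u, u = x ∨ u = v ∨ u = w := by
  have hcard : ((univ.erase x).erase v).card = 1 := by
    rw [card_erase_of_mem (by simp [hxv.symm]), card_erase_of_mem (mem_univ x), card_univ, hn]
  obtain ⟨w, hw⟩ := card_eq_one.1 hcard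
  have hw_mem : w ∈ (univ.erase x).erase v := hw ▸ mem_singleton_self w
  refine ⟨w, (mem_erase.1 (mem_erase.1 hw_mem).2).1, (mem_erase.1 hw_mem).1, fun u => ?_⟩
  by_cases hux : u = x
  · exact Or.inl hux
  by_cases huv : u = v
  · exact Or.inr (Or.inl huv)
  · exact Or.inr (Or.inr (mem_singleton.1 (hw ▸ by simp [hux, huv])))

theorem makerWinsM_three_of_opening (hn : Fintype.card V = 3)
    (hopen : MakerMove G K (fun _ => none) ds x o)
    (hlast : ∀ v o' ds' w,
      BreakerMove G K (update (fun _ => none) x (some o)) ds v o' ds' → w ≠ x → w ≠ v →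
      ∃ o'', MakerMove G K (update (update (fun _ => none) x (some o)) v (some o')) ds' w o'') :
    MakerWinsM G K 3 (fun _ => none) ds true := by
  refine makerWinsM_succ_of_makerMove hopen (makerWinsM_succ_false_of_forall_breakerMove ?_ ?_)
  · have : Nontrivial V := Fintype.one_lt_card_iff_nontrivial.1 (by omega)
    obtain ⟨v, hvx⟩ := exists_ne x
    obtain ⟨w, hwx, hwv, -⟩ := exists_third_of_card_eq_three hn hvx.symm
    have hv : update (fun _ => none) x (some o) v = none := by simp [hvx]
    obtain ⟨o'', h⟩ := hlast v none _ w ⟨hv, Or.inl rfl⟩ hwx hwv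
    exact not_mEnded_of_makerMove (h.of_update_blank hv)
  · intro v o' ds' hmove
    have hvx : v ≠ x := by
      rintro rfl
      simpa using hmove.eq_none
    obtain ⟨w, hwx, hwv, hcover⟩ := exists_third_of_card_eq_three hn hvx.symm
    obtain ⟨o'', h⟩ := hlast v o' ds' w hmove hwx hwv
    refine makerWinsM_one_of_makerMove h fun u huw => ?_
    rcases hcover u with rfl | rfl | rfl
    · simp [hvx.symm]
    · simp
    · exact absurd rfl huw

theorem makerWinsM_three_of_mem_marked {d : Finset V} (hn : Fintype.card V = 3)
    (hopen : MakerMove G K (fun _ => none) ds x o) (hd : d ∈ ds) (hcover : ∀ v, v ≠ x → v ∈ d) :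
    MakerWinsM G K 3 (fun _ => none) ds true := by
  refine makerWinsM_three_of_opening hn hopen fun v o' ds' w hmove hwx hwv => ⟨none, ?_, ?_⟩
  · simp [hwx, hwv]
  · have hvx : v ≠ x := by
      rintro rfl
      simpa using hmove.eq_none
    exact ⟨d, hmove.mem_of_mem hd (hcover v hvx), hcover w hwx⟩

theorem makerWinsM_three_of_blank (hn : Fintype.card V = 3) (hx : InMarked ds x)
    (hcol : ∀ v w, v ≠ x → w ≠ x → v ≠ w → ∀ c, ∃ c' ∈ K, G.Adj w v → c' ≠ c) :
    MakerWinsM G K 3 (fun _ => none) ds true := by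
  refine makerWinsM_three_of_opening (o := none) hn ⟨rfl, hx⟩
    fun v o' ds' w hmove hwx hwv => ?_
  have hvx : v ≠ x := by
    rintro rfl
    simpa using hmove.eq_none
  obtain ⟨c', hc'K, hc'⟩ := hcol v w hvx hwx hwv.symm (o'.getD 0)
  refine ⟨some c', hc'K, by simp [hwx, hwv], fun u hu => ?_⟩
  rcases eq_or_ne u v with rfl | huv
  · cases o' with
    | none => simp
    | some c => simpa using (hc' hu).symm
  · rcases eq_or_ne u x with rfl | hux
    · simp [huv]
    · simp [huv, hux]

end OrderThree

section Partition

variable {V : Type*} {G : SimpleGraph V} {p : ℕ} {C : Fin p → Finset V} {i : Fin p} {v w : V}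

lemma one_lt_of_not_mem_class (hCcover : ∀ v : V, ∃ i, v ∈ C i) (hv : v ∉ C i) : 1 < p := by
  obtain ⟨j, hj⟩ := hCcover v
  have hij : i.val ≠ j.val := fun h => hv (Fin.ext h ▸ hj)
  omega

lemma two_lt_of_adj_of_not_mem_class (hCind : ∀ i, IsIndepF G (C i))
    (hCcover : ∀ v : V, ∃ i, v ∈ C i) (hv : v ∉ C i) (hw : w ∉ C i) (hadj : G.Adj v w) :
    2 < p := by
  obtain ⟨j, hj⟩ := hCcover v
  obtain ⟨k, hk⟩ := hCcover w
  have hij : i.val ≠ j.val := fun h => hv (Fin.ext h ▸ hj)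
  have hik : i.val ≠ k.val := fun h => hw (Fin.ext h ▸ hk)
  have hjk : j.val ≠ k.val := fun h => hCind j v hj w (Fin.ext h ▸ hk) hadj
  omega

lemma exists_mem_range_ne_of_not_mem_class (hCind : ∀ i, IsIndepF G (C i))
    (hCcover : ∀ v : V, ∃ i, v ∈ C i) (hv : v ∉ C i) (hw : w ∉ C i) (c : ℕ) :
    ∃ c' ∈ range (p - 1), G.Adj w v → c' ≠ c := by
  by_cases hadj : G.Adj w v
  · have := two_lt_of_adj_of_not_mem_class hCind hCcover hw hv hadj
    refine ⟨if c = 0 then 1 else 0, by split_ifs <;> simp <;> omega, fun _ => ?_⟩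
    split_ifs <;> omega
  · exact ⟨0, by simpa using one_lt_of_not_mem_class hCcover hv, fun h => absurd h hadj⟩

end Partition

theorem chiGbM_le_of_order_three_general {V : Type*} [Fintype V] [DecidableEq V]
    (G : SimpleGraph V) (hn : Fintype.card V = 3)
    {p : ℕ} (C : Fin p → Finset V)
    (hCne : ∀ i, (C i).Nonempty)
    (hCind : ∀ i, IsIndepF G (C i))
    (hCcover : ∀ v : V, ∃ i, v ∈ C i)
    {s : ℕ} (hs : 1 ≤ s) (ι : Fin s → Fin p) :
    chiGbM G (Finset.image (fun i => C (ι i)) Finset.univ) ≤ p - 1 := by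
  set i₀ := ι ⟨0, hs⟩
  have hd : C i₀ ∈ Finset.image (fun i => C (ι i)) Finset.univ := mem_image_of_mem _ (mem_univ _)
  refine Nat.sInf_le ?_
  rw [Set.mem_ofPred_eq, hn]
  obtain ⟨y, hy⟩ := hCne i₀
  by_cases htwo : ∃ z ∈ C i₀, z ≠ y
  · obtain ⟨z, hz, hzy⟩ := htwo
    obtain ⟨x, -, -, hcover⟩ := exists_third_of_card_eq_three hn hzy.symm
    have hcover' : ∀ v, v ≠ x → v ∈ C i₀ := fun v hvx => by
      rcases hcover v with rfl | rfl | rfl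
      exacts [hy, hz, absurd rfl hvx]
    by_cases hx : x ∈ C i₀
    · exact makerWinsM_three_of_mem_marked hn (o := none) ⟨rfl, C i₀, hd, hx⟩ hd hcover'
    · have h0 : 0 ∈ range (p - 1) := by simpa using one_lt_of_not_mem_class hCcover hx
      exact makerWinsM_three_of_mem_marked hn (o := some 0) ⟨h0, rfl, by simp⟩ hd hcover'
  · push Not at htwo
    exact makerWinsM_three_of_blank hn ⟨C i₀, hd, hy⟩ fun v w hvy hwy _ =>
      exists_mem_range_ne_of_not_mem_class hCind hCcover (fun h => hvy (htwo v h))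
        (fun h => hwy (htwo w h))

/-- If `G` has order 3, `C₁,…,C_p` is a partition of `V(G)` into `p`
disjoint independent sets, and `D₁,…,Dₛ` are some `s ≥ 1` of these sets, then
`χ_gb(G; D₁,…,Dₛ) ≤ p − 1`. -/
theorem chiGbM_le_of_order_three {V : Type*} [Fintype V] [DecidableEq V]
    (G : SimpleGraph V) (hn : Fintype.card V = 3)
    {p : ℕ} (C : Fin p → Finset V)
    (hCne : ∀ i, (C i).Nonempty)
    (hCind : ∀ i, IsIndepF G (C i))
    (hCdisj : ∀ i j, i ≠ j → Disjoint (C i) (C j))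
    (hCcover : ∀ v : V, ∃ i, v ∈ C i)
    {s : ℕ} (hs : 1 ≤ s) (ι : Fin s → Fin p) (hι : Function.Injective ι) :
    chiGbM G (Finset.image (fun i => C (ι i)) Finset.univ) ≤ p - 1 :=
  chiGbM_le_of_order_three_general G hn C hCne hCind hCcover hs ι

end GameCol
end

section
/- For any finite simple graph G of order n with 2 ≤ n ≤ 5, we have χ_gb(G) ≤ χ(G) + ⌊n/2⌋ − 1. -/
open Function

namespace GameCol

variable {V : Type*} [Fintype V] [DecidableEq V]

/-!
Let `k = χ(G) + ⌊n/2⌋ - 1` and call a vertex high if its degree is at least `k`. An unplayed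
vertex of degree `< k`, or any unplayed vertex while fewer than `k` vertices have been played,
still has a free colour. Maker colours the remaining high vertices first; then each round of
play adds two played vertices and removes at least one unplayed high vertex, so the invariant
`#played + 2 · #(unplayed high) ≤ k + 1` survives and the game never blocks. It starts out true
because for `n ≤ 5` there are at most two high vertices, and two only when `k ≥ 3`: high
vertices are universal (so they span a clique with any further vertex) unless `n = 5`,
`χ(G) = 2`, where the two colour classes are counted instead.
-/

section Game

open Finset

variable (G : SimpleGraph V) [DecidableRel G.Adj]

def played (f : V → Option (Option ℕ)) : Finset V := {v | f v ≠ none}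

omit [DecidableEq V] in
@[simp]
lemma mem_played {f : V → Option (Option ℕ)} {v : V} : v ∈ played f ↔ f v ≠ none := by
  simp [played]

omit [DecidableEq V] in
lemma played_const_none : played (fun _ : V => (none : Option (Option ℕ))) = ∅ := by
  ext
  simp

lemma played_update (f : V → Option (Option ℕ)) (w : V) (x : Option ℕ) :
    played (update f w (some x)) = insert w (played f) := by
  ext v
  by_cases hv : v = w <;> simp [hv]

omit [DecidableEq V] in
lemma allPlayed_of_card_le_card_played {f : V → Option (Option ℕ)}
    (h : Fintype.card V ≤ #(played f)) : AllPlayed f := by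
  have hf : played f = univ := eq_univ_of_card _ (le_antisymm (card_le_univ _) h)
  exact fun v => mem_played.mp (hf ▸ mem_univ v)

omit [DecidableEq V] in
lemma exists_bColLegal_of_min_lt {k : ℕ} {f : V → Option (Option ℕ)} {v : V}
    (hv : f v = none) (h : min (G.degree v) #(played f) < k) :
    ∃ c, BColLegal G (range k) f v c := by
  set playedNbrs := {u ∈ G.neighborFinset v | f u ≠ none}
  have hcard : #playedNbrs < k := by
    refine lt_of_le_of_lt (le_min ?_ (card_le_card fun u hu => ?_)) h
    · exact G.card_neighborFinset_eq_degree v ▸ card_filter_le _ _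
    · exact mem_played.mpr (mem_filter.mp hu).2
  obtain ⟨c, hc, hfree⟩ := exists_mem_notMem_of_card_lt_card
    (s := playedNbrs.image fun u => (f u).join.getD 0) (t := range k)
    (by rw [card_range]; exact card_image_le.trans_lt hcard)
  refine ⟨c, hc, hv, fun u hadj hu => hfree (mem_image.mpr ⟨u, ?_, by simp [hu]⟩)⟩
  simp [playedNbrs, hadj, hu]

theorem makerWinsB_of_card_high_le {k : ℕ} (H : Finset V) (hH : ∀ v ∉ H, G.degree v < k) :
    ∀ (fuel : ℕ) (f : V → Option (Option ℕ)) (b : Bool),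
      Fintype.card V ≤ #(played f) + fuel →
      ((H \ played f).Nonempty → #(played f) + 2 * #(H \ played f) ≤ k + b.toNat) →
      MakerWinsB G (range k) fuel f b := by
  intro fuel
  induction fuel with
  | zero =>
    intro f b hfuel _
    cases b <;> exact allPlayed_of_card_le_card_played hfuel
  | succ fuel ih =>
    intro f b hfuel hinv
    have hmove : ∀ w x b', f w = none →
        (((H \ played f).erase w).Nonempty →
          #(played f) + 1 + 2 * #((H \ played f).erase w) ≤ k + b'.toNat) →
        MakerWinsB G (range k) fuel (update f w (some x)) b' := by
      intro w x b' hw h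
      have hw' : w ∉ played f := by simpa using hw
      apply ih <;> rw [played_update, card_insert_of_notMem hw']
      · omega
      · rwa [sdiff_insert]
    have hlegal : ∀ v, f v = none → ∃ c, BColLegal G (range k) f v c := by
      intro v hv
      refine exists_bColLegal_of_min_lt G hv ?_
      by_cases hvH : v ∈ H
      · have hvD : v ∈ H \ played f := by simp [hvH, hv]
        have := hinv ⟨v, hvD⟩
        have := card_pos.mpr ⟨v, hvD⟩
        have := b.toNat_le
        exact min_lt_of_right_lt (by omega)
      · exact min_lt_of_left_lt (hH v hvH)
    by_cases hall : AllPlayed f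
    · cases b
      · exact Or.inl ⟨fun ⟨v, c, hvc⟩ => hall v hvc.2.1, hall⟩
      · exact Or.inl hall
    obtain ⟨v, hv⟩ : ∃ v, f v = none := by simpa [AllPlayed] using hall
    cases b
    case false =>
      have hreply : ∀ w x, f w = none →
          MakerWinsB G (range k) fuel (update f w (some x)) true :=
        fun w x hw => hmove w x true hw fun hne => by
          have := hinv (hne.mono (erase_subset _ _))
          have := card_erase_le (s := H \ played f) (a := w)
          simp only [Bool.toNat_true, Bool.toNat_false] at *
          omega
      exact Or.inr
        ⟨⟨v, hlegal v hv⟩, fun w c hwc => hreply w _ hwc.2.1, fun w hw => hreply w _ hw⟩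
    case true =>
      obtain ⟨w, hw, hwD⟩ :
          ∃ w, f w = none ∧ ((H \ played f).Nonempty → w ∈ H \ played f) := by
        by_cases hne : (H \ played f).Nonempty
        · obtain ⟨w, hwD⟩ := hne
          exact ⟨w, by simpa using (mem_sdiff.mp hwD).2, fun _ => hwD⟩
        · exact ⟨v, hv, fun h => absurd h hne⟩
      obtain ⟨c, hc⟩ := hlegal w hw
      refine Or.inr ⟨w, c, hc, hmove w _ false hw fun hne => ?_⟩
      have hD := hne.mono (erase_subset _ _)
      have := card_erase_add_one (hwD hD)
      have := hinv hD
      simp only [Bool.toNat_true, Bool.toNat_false] at *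
      omega

end Game

section HighDegree

open Finset

variable {G : SimpleGraph V}

lemma min_card_add_one_le_of_isUniversal {m : ℕ} (hm : G.Colorable m) {T : Finset V}
    (hT : ∀ v ∈ T, G.IsUniversal v) : min (#T + 1) (Fintype.card V) ≤ m := by
  have hclique : G.IsClique (T : Set V) := fun a ha _ _ hab => hT a ha hab
  by_cases hfull : T = univ
  · subst hfull
    exact min_le_of_right_le (card_univ (α := V) ▸ hclique.card_le_of_colorable hm)
  · obtain ⟨w, hw⟩ := not_forall.mp fun h => hfull (eq_univ_iff_forall.mpr h)
    have hclique' : G.IsClique ((insert w T : Finset V) : Set V) := by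
      rw [coe_insert]
      exact hclique.insert fun b hb hwb => (hT b hb hwb.symm).symm
    rw [← card_insert_of_notMem hw]
    exact min_le_of_left_le (hclique'.card_le_of_colorable hm)

lemma min_card_add_le_of_colorable_two [DecidableRel G.Adj] (hG : G.Colorable 2)
    {S : Finset V} (hS : S.Nonempty) {d : ℕ} (hd : ∀ v ∈ S, d ≤ G.degree v) :
    min #S d + d ≤ Fintype.card V := by
  obtain ⟨C⟩ := hG
  have hother : ∀ v ∈ S, d ≤ #{w | C w ≠ C v} := fun v hv =>
    (hd v hv).trans <| G.card_neighborFinset_eq_degree v ▸ card_le_card fun w hw => by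
      simpa using (C.valid ((G.mem_neighborFinset v w).mp hw)).symm
  have hsplit : ∀ v : V, #{w | C w = C v} + #{w | C w ≠ C v} = Fintype.card V :=
    fun v => card_filter_add_card_filter_not _
  obtain ⟨v, hv⟩ := hS
  by_cases hsame : ∀ u ∈ S, C u = C v
  · have : #S ≤ #{w | C w = C v} := card_le_card fun u hu => by simpa using hsame u hu
    have := hother v hv
    have := hsplit v
    omega
  · push Not at hsame
    obtain ⟨u, hu, huv⟩ := hsame
    have hclass : filter (fun w => C w ≠ C u) univ = filter (fun w => C w = C v) univ := by
      have fin_two : ∀ a b c : Fin 2, b ≠ c → (a ≠ b ↔ a = c) := by decide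
      ext w
      simpa using fin_two (C w) (C u) (C v) huv
    have hu' := hother u hu
    rw [hclass] at hu'
    have := hother v hv
    have := hsplit v
    omega

lemma two_mul_card_le_of_colorable [DecidableRel G.Adj] {m : ℕ} (hm : G.Colorable m)
    (h2 : 2 ≤ Fintype.card V) (h5 : Fintype.card V ≤ 5) {H : Finset V} (hH : H.Nonempty)
    (hdeg : ∀ v ∈ H, m + Fintype.card V / 2 - 1 ≤ G.degree v) :
    2 * #H ≤ m + Fintype.card V / 2 := by
  obtain ⟨v, hv⟩ := hH
  have := G.degree_lt_card_verts v
  have := hdeg v hv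
  obtain rfl | rfl | hm2 : m = 0 ∨ m = 1 ∨ 2 ≤ m := by omega
  · obtain ⟨C⟩ := hm
    exact (C v).elim0
  · obtain ⟨C⟩ := hm
    have : G.degree v = 0 :=
      (G.degree_eq_zero v).mpr fun w h => C.valid h (Subsingleton.elim (α := Fin 1) _ _)
    omega
  by_cases h52 : Fintype.card V = 5 ∧ m = 2
  · obtain ⟨hn, rfl⟩ := h52
    have := min_card_add_le_of_colorable_two hm ⟨v, hv⟩ (d := 3) fun u hu => by
      have := hdeg u hu
      omega
    omega
  · have huniv : ∀ u ∈ H, G.IsUniversal u := fun u hu => by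
      have := hdeg u hu
      have := G.degree_lt_card_verts u
      exact (G.degree_eq_card_sub_one u).mp (by omega)
    have := min_card_add_one_le_of_isUniversal hm huniv
    have := card_le_univ H
    omega

end HighDegree

/-- For any finite simple graph `G` of order `n` with `2 ≤ n ≤ 5`,
`χ_gb(G) ≤ χ(G) + ⌊n/2⌋ − 1`. -/
theorem chiGb_le_of_small_order {V : Type*} [Fintype V] [DecidableEq V]
    (G : SimpleGraph V) (h2 : 2 ≤ Fintype.card V) (h5 : Fintype.card V ≤ 5) :
    chiGb G ≤ G.chromaticNumber.toNat + Fintype.card V / 2 - 1 := by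
  classical
  let H : Finset V := {v | G.chromaticNumber.toNat + Fintype.card V / 2 - 1 ≤ G.degree v}
  have hhigh : ∀ v ∈ H, _ ≤ G.degree v := fun v hv => (Finset.mem_filter.mp hv).2
  have hlow : ∀ v ∉ H, G.degree v < _ := fun v hv =>
    not_le.mp fun h => hv (Finset.mem_filter.mpr ⟨Finset.mem_univ v, h⟩)
  refine Nat.sInf_le <| makerWinsB_of_card_high_le G H hlow _ _ true
    (by simp [played_const_none]) fun hne => ?_
  rw [played_const_none, Finset.sdiff_empty] at hne ⊢
  have := two_mul_card_le_of_colorable G.colorable_chromaticNumber_of_fintype h2 h5 hne hhigh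
  simp only [Finset.card_empty, Bool.toNat_true]
  omega

end GameCol
end

section
/- For any constant ε > 0, there is some integer n and a finite simple graph G on n vertices for which m(G) − χ(G) > (1 − ε)·n. -/
/-! In the Turán graph with `t` parts of size `t` every vertex has degree `t² - t`, and the
vertex marked last has all its neighbours marked, so Maker needs more than `t² - t` in the
marking game; a proper colouring by parts shows `χ ≤ t`. Hence `m - χ > t² - 2t`, which
exceeds `(1 - ε) t²` once `t > 2 / ε`. -/

open Function

namespace SimpleGraph

lemma ncard_neighborSet_eq_degree {V : Type*} (G : SimpleGraph V) (v : V)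
    [Fintype (G.neighborSet v)] : (G.neighborSet v).ncard = G.degree v := by
  rw [← card_neighborSet_eq_degree, Set.ncard_eq_toFinset_card', Set.toFinset_card]

variable {r t : ℕ}

lemma minDegree_completeEquipartiteGraph (hr : 0 < r) (ht : 0 < t) :
    (completeEquipartiteGraph r t).minDegree = (r - 1) * t := by
  have : Nonempty (Fin r × Fin t) := ⟨(⟨0, hr⟩, ⟨0, ht⟩)⟩
  obtain ⟨v, hv⟩ := (completeEquipartiteGraph r t).exists_minimal_degree_vertex
  rw [hv, degree_completeEquipartiteGraph]

lemma le_minDegree_turanGraph (hr : 0 < r) (ht : 0 < t) :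
    (r - 1) * t ≤ (turanGraph (r * t) r).minDegree := by
  rw [← minDegree_completeEquipartiteGraph hr ht]
  exact Copy.minDegree_mono (f := completeEquipartiteGraph.turanGraph.toCopy)
    completeEquipartiteGraph.turanGraph.surjective

lemma colorable_turanGraph : (turanGraph (r * t) r).Colorable r := by
  have C : (turanGraph (r * t) r).Coloring (Fin r) :=
    Coloring.mk (fun v => (completeEquipartiteGraph.turanGraph.symm v).1)
      (fun h heq => h (congrArg Fin.val heq))
  simpa using C.colorable

end SimpleGraph

namespace GameCol

variable {V : Type*}

lemma markLegal_fintypeCard [Fintype V] (G : SimpleGraph V) {M : Set V} {v : V} (hv : v ∉ M) :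
    MarkLegal G (Fintype.card V) M v := by
  refine ⟨hv, ?_⟩
  have hne : M ∩ {u | G.Adj v u} ≠ Set.univ := fun h => hv (h ▸ Set.mem_univ v).1
  simpa [Nat.card_eq_fintype_card] using Set.ncard_lt_card hne

lemma makerWinsMark_fintypeCard [Fintype V] (G : SimpleGraph V) (fuel : ℕ) (M : Set V)
    (b : Bool) (h : Fintype.card V ≤ fuel + M.ncard) :
    MakerWinsMark G (Fintype.card V) fuel M b := by
  induction fuel generalizing M b with
  | zero =>
    have hM : M = Set.univ := Set.eq_of_subset_of_ncard_le (Set.subset_univ M)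
      (by simpa [Nat.card_eq_fintype_card] using h)
    cases b <;> exact fun v => hM ▸ Set.mem_univ v
  | succ fuel ih =>
    by_cases hM : M = Set.univ
    · cases b <;> exact Or.inl fun v => hM ▸ Set.mem_univ v
    obtain ⟨v, hv⟩ := Set.ne_univ_iff_exists_notMem M |>.mp hM
    have hins : ∀ w ∉ M, Fintype.card V ≤ fuel + (insert w M).ncard := fun w hw => by
      rw [Set.ncard_insert_of_notMem hw]; omega
    cases b with
    | true => exact Or.inr ⟨v, markLegal_fintypeCard G hv, ih _ false (hins v hv)⟩
    | false =>
      exact Or.inr ⟨⟨v, markLegal_fintypeCard G hv⟩, fun w hw => ih _ true (hins w hw.1)⟩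

lemma exists_markLegal_of_makerWinsMark {G : SimpleGraph V} {k fuel : ℕ} {M : Set V}
    {b : Bool} (h : MakerWinsMark G k (fuel + 1) M b) (hM : M ≠ Set.univ) :
    ∃ v, MarkLegal G k M v ∧ MakerWinsMark G k fuel (insert v M) (!b) := by
  have hfull : ¬ ∀ v, v ∈ M := fun h => hM (Set.eq_univ_iff_forall.mpr h)
  cases b with
  | true => exact h.resolve_left hfull
  | false =>
    obtain ⟨⟨v, hv⟩, hwin⟩ := h.resolve_left hfull
    exact ⟨v, hv, hwin v hv⟩

lemma degree_lt_of_markLegal_of_insert_eq_univ {G : SimpleGraph V} {k : ℕ} {M : Set V}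
    {v : V} [Fintype (G.neighborSet v)] (hv : MarkLegal G k M v)
    (hlast : insert v M = Set.univ) : G.degree v < k := by
  have hN : G.neighborSet v ⊆ M := fun u hu =>
    (hlast ▸ Set.mem_univ u : u ∈ insert v M).resolve_left (G.ne_of_adj hu).symm
  rw [← G.ncard_neighborSet_eq_degree, ← Set.inter_eq_self_of_subset_right hN]
  exact hv.2

lemma minDegree_lt_of_makerWinsMark [Fintype V] {G : SimpleGraph V} [DecidableRel G.Adj]
    {k : ℕ} (fuel : ℕ) (M : Set V) (b : Bool) (h : MakerWinsMark G k fuel M b)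
    (hM : M ≠ Set.univ) : G.minDegree < k := by
  induction fuel generalizing M b with
  | zero => exact absurd (Set.eq_univ_iff_forall.mpr h) hM
  | succ fuel ih =>
    obtain ⟨v, hv, hwin⟩ := exists_markLegal_of_makerWinsMark h hM
    by_cases hlast : insert v M = Set.univ
    · exact (G.minDegree_le_degree v).trans_lt
        (degree_lt_of_markLegal_of_insert_eq_univ hv hlast)
    · exact ih _ _ hwin hlast

theorem minDegree_lt_markingNumber [Fintype V] [DecidableEq V] [Nonempty V]
    (G : SimpleGraph V) [DecidableRel G.Adj] : G.minDegree < markingNumber G := by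
  have hwin : markingNumber G ∈ {k | MakerWinsMark G k (Fintype.card V) ∅ true} :=
    Nat.sInf_mem ⟨_, makerWinsMark_fintypeCard G _ ∅ true (by simp)⟩
  exact minDegree_lt_of_makerWinsMark _ _ _ hwin Set.empty_ne_univ

/-- For any `ε > 0` there is a finite simple graph `G` on some `n`
vertices with `m(G) − χ(G) > (1 − ε)·n`. -/
theorem exists_graph_markingNumber_sub_chromatic_gt (ε : ℝ) (hε : 0 < ε) :
    ∃ (n : ℕ) (G : SimpleGraph (Fin n)),
      (markingNumber G : ℝ) - (G.chromaticNumber.toNat : ℝ) > (1 - ε) * n := by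
  obtain ⟨t, ht⟩ := exists_nat_gt (2 / ε)
  have htpos : 0 < t := by exact_mod_cast (div_pos two_pos hε).trans ht
  have hεt : 2 < ε * t := by rwa [div_lt_iff₀' hε] at ht
  have : Nonempty (Fin (t * t)) := ⟨⟨0, Nat.mul_pos htpos htpos⟩⟩
  set G := SimpleGraph.turanGraph (t * t) t
  have hm : (t - 1) * t < markingNumber G :=
    (SimpleGraph.le_minDegree_turanGraph htpos htpos).trans_lt (minDegree_lt_markingNumber G)
  have hχ : G.chromaticNumber.toNat ≤ t :=
    ENat.toNat_le_of_le_natCast SimpleGraph.colorable_turanGraph.chromaticNumber_le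
  refine ⟨t * t, G, ?_⟩
  have hm' : ((t - 1 : ℕ) : ℝ) * t + 1 ≤ markingNumber G := by exact_mod_cast hm
  have hχ' : (G.chromaticNumber.toNat : ℝ) ≤ t := by exact_mod_cast hχ
  rw [Nat.cast_pred htpos] at hm'
  push_cast
  nlinarith

end GameCol
end
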